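/- Let L be a De Morgan lattice and define the relation θ on L by: a θ b if and only if there exists f ∈ F_comp with (¬f ⊔ a) ⊓ f = (¬f ⊔ b) ⊓ f. Then θ is a congruence on L; ((x ⊓ ¬x) ⊔ y) θ y holds for all x, y ∈ L; and θ is contained in every congruence θ' on L satisfying ((x ⊓ ¬x) ⊔ y) θ' y for all x, y ∈ L. (That is, θ is the smallest congruence on L whose quotient is a Boolean lattice.) -/

import Mathlib

/-!
For each `f`, the map `a ↦ (∼f ⊔ a) ⊓ f` preserves `⊓` and `⊔`, turns `∼` into `∼(·) ⊓ f`, and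
for `g ≤ f` the map at `g` factors through the map at `f`. Since `Fcomp` is a filter, two
witnesses can be replaced by their meet, which gives the congruence properties. Conversely, in a
congruence collapsing `(x ⊓ ∼x) ⊔ y` to `y`, every `f ∈ Fcomp` satisfies `f ⊓ y ≡ y` and
`∼f ⊔ y ≡ y`, hence `a ≡ (∼f ⊔ a) ⊓ f`, so a common image forces `a ≡ b`.
-/

/-- A De Morgan lattice: a distributive lattice with an antitone involution. -/
class DeMorgan (L : Type*) extends DistribLattice L where
  dneg : L → L
  dneg_dneg : ∀ x : L, dneg (dneg x) = x
  dneg_sup : ∀ x y : L, dneg (x ⊔ y) = dneg x ⊓ dneg y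

prefix:max "∼" => DeMorgan.dneg

section Defs

variable {α : Type*}

/-- An upward closed subset of a lattice. -/
def IsUpset [Lattice α] (F : Set α) : Prop :=
  ∀ ⦃x y : α⦄, x ∈ F → x ≤ y → y ∈ F

/-- A lattice filter: an upset closed under binary meets. -/
def IsLatFilter [Lattice α] (F : Set α) : Prop :=
  IsUpset F ∧ ∀ x y : α, x ∈ F → y ∈ F → x ⊓ y ∈ F

/-- An `n`-filter: an upset such that for every nonempty finite `Y`, if the meet of
every nonempty subset of `Y` of size at most `n` lies in `F`, then so does the meet of `Y`. -/
def IsNFilter [Lattice α] (n : ℕ) (F : Set α) : Prop :=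
  IsUpset F ∧ ∀ (Y : Finset α) (hY : Y.Nonempty),
    (∀ (X : Finset α) (hX : X.Nonempty), X ⊆ Y → X.card ≤ n → X.inf' hX id ∈ F) →
    Y.inf' hY id ∈ F

/-- A prime upset: `x ⊔ y ∈ F` implies `x ∈ F` or `y ∈ F`. -/
def IsPrimeUpset [Lattice α] (F : Set α) : Prop :=
  ∀ x y : α, x ⊔ y ∈ F → x ∈ F ∨ y ∈ F

/-- A downward closed subset of a lattice. -/
def IsDownset [Lattice α] (I : Set α) : Prop :=
  ∀ ⦃x y : α⦄, x ∈ I → y ≤ x → y ∈ I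

/-- A lattice ideal: a downset closed under binary joins. -/
def IsIdeal [Lattice α] (I : Set α) : Prop :=
  IsDownset I ∧ ∀ x y : α, x ∈ I → y ∈ I → x ⊔ y ∈ I

/-- An `n`-ideal: the order dual notion of an `n`-filter. -/
def IsNIdeal [Lattice α] (n : ℕ) (I : Set α) : Prop :=
  IsDownset I ∧ ∀ (Y : Finset α) (hY : Y.Nonempty),
    (∀ (X : Finset α) (hX : X.Nonempty), X ⊆ Y → X.card ≤ n → X.sup' hX id ∈ I) →
    Y.sup' hY id ∈ I

variable {L : Type*} [DeMorgan L]

/-- Almost complete upset: `x ∈ F` implies `x ⊓ (y ⊔ ∼y) ∈ F`. -/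
def AlmostComplete (F : Set L) : Prop := ∀ x ∈ F, ∀ y : L, x ⊓ (y ⊔ ∼y) ∈ F

/-- Complete upset: almost complete and nonempty. -/
def IsCompleteUpset (F : Set L) : Prop := AlmostComplete F ∧ F.Nonempty

/-- Almost consistent upset: `(x ⊓ ∼x) ⊔ y ∈ F` implies `y ∈ F`. -/
def AlmostConsistent (F : Set L) : Prop := ∀ x y : L, (x ⊓ ∼x) ⊔ y ∈ F → y ∈ F

/-- Consistent upset: almost consistent and not total. -/
def IsConsistentUpset (F : Set L) : Prop := AlmostConsistent F ∧ F ≠ Set.univ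

/-- Classical upset: complete and consistent. -/
def IsClassicalUpset (F : Set L) : Prop := IsCompleteUpset F ∧ IsConsistentUpset F

/-- Kalman upset. -/
def IsKalmanUpset (F : Set L) : Prop :=
  ∀ x y z u : L, ((x ⊓ ∼x) ⊓ z) ⊔ u ∈ F → ((y ⊔ ∼y) ⊓ z) ⊔ u ∈ F

/-- A homomorphism of De Morgan lattices. -/
def IsDMHom {L M : Type*} [DeMorgan L] [DeMorgan M] (h : L → M) : Prop :=
  (∀ x y : L, h (x ⊓ y) = h x ⊓ h y) ∧ (∀ x y : L, h (x ⊔ y) = h x ⊔ h y) ∧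
    ∀ x : L, h (∼x) = ∼(h x)

/-- The filter generated by all elements of the form `x ⊔ ∼x`. -/
def Fcomp (L : Type*) [DeMorgan L] : Set L :=
  {a | ∃ (s : Finset L) (hs : s.Nonempty), s.inf' hs (fun x => x ⊔ ∼x) ≤ a}

/-- The `n`-filter generated by a set. -/
def nFilterGen (n : ℕ) (U : Set L) : Set L :=
  ⋂₀ {F : Set L | IsNFilter n F ∧ U ⊆ F}

/-- `Comp U`. -/
def CompCl (U : Set L) : Set L := {x | ∃ a ∈ U, ∃ f ∈ Fcomp L, a ⊓ f ≤ x}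

/-- `Cons U`. -/
def ConsCl (U : Set L) : Set L := {x | ∃ f ∈ Fcomp L, ∼f ⊔ x ∈ U}

/-- A congruence of De Morgan lattices, as a binary relation. -/
def IsCongruence (θ : L → L → Prop) : Prop :=
  Equivalence θ ∧
  (∀ a b c d : L, θ a b → θ c d → θ (a ⊓ c) (b ⊓ d)) ∧
  (∀ a b c d : L, θ a b → θ c d → θ (a ⊔ c) (b ⊔ d)) ∧
  ∀ a b : L, θ a b → θ (∼a) (∼b)

end Defs

/-- The four-element De Morgan lattice `DM₁` on `Bool × Bool`. -/
instance : DeMorgan (Bool × Bool) :=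
  { (inferInstance : DistribLattice (Bool × Bool)) with
    dneg := fun p => (!p.2, !p.1)
    dneg_dneg := by decide
    dneg_sup := by decide }

/-- Powers of `DM₁`, with componentwise operations. -/
instance {ι : Type*} : DeMorgan (ι → Bool × Bool) :=
  { (inferInstance : DistribLattice (ι → Bool × Bool)) with
    dneg := fun f i => ∼(f i)
    dneg_dneg := fun f => funext fun i => DeMorgan.dneg_dneg (f i)
    dneg_sup := fun f g => funext fun i => DeMorgan.dneg_sup (f i) (g i) }

namespace DeMorgan

variable {L : Type*} [DeMorgan L]

theorem dneg_inf (x y : L) : ∼(x ⊓ y) = ∼x ⊔ ∼y := by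
  rw [← dneg_dneg (∼x ⊔ ∼y), dneg_sup, dneg_dneg, dneg_dneg]

theorem dneg_le_dneg {x y : L} (h : x ≤ y) : ∼y ≤ ∼x := by
  rw [← sup_eq_right.mpr h, dneg_sup]
  exact inf_le_left

end DeMorgan

open DeMorgan

section Fcomp

variable {L : Type*} [DeMorgan L]

theorem sup_dneg_mem_Fcomp (x : L) : x ⊔ ∼x ∈ Fcomp L :=
  ⟨{x}, Finset.singleton_nonempty x, by simp⟩

theorem isLatFilter_Fcomp : IsLatFilter (Fcomp L) := by
  classical
  refine ⟨fun a b ⟨s, hs, hsa⟩ hab => ⟨s, hs, hsa.trans hab⟩, ?_⟩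
  rintro a b ⟨s, hs, hsa⟩ ⟨t, ht, htb⟩
  refine ⟨s ∪ t, hs.mono Finset.subset_union_left, le_inf ?_ ?_⟩
  · exact (Finset.inf'_mono _ Finset.subset_union_left hs).trans hsa
  · exact (Finset.inf'_mono _ Finset.subset_union_right ht).trans htb

theorem Fcomp_subset_of_isLatFilter {S : Set L} (hS : IsLatFilter S) (hgen : ∀ x, x ⊔ ∼x ∈ S) :
    Fcomp L ⊆ S := by
  rintro a ⟨s, hs, hsa⟩
  exact hS.1 (Finset.inf'_mem S (fun x hx y hy => hS.2 x y hx hy) s hs _ fun x _ => hgen x) hsa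

end Fcomp

section Relativize

variable {L : Type*} [DeMorgan L]

def relativize (f a : L) : L := (∼f ⊔ a) ⊓ f

theorem relativize_inf (f a b : L) :
    relativize f (a ⊓ b) = relativize f a ⊓ relativize f b := by
  rw [relativize, relativize, relativize, sup_inf_left, inf_inf_distrib_right]

theorem relativize_sup (f a b : L) :
    relativize f (a ⊔ b) = relativize f a ⊔ relativize f b := by
  rw [relativize, relativize, relativize, ← inf_sup_right, sup_sup_sup_comm, sup_idem]

theorem relativize_dneg (f a : L) : relativize f (∼a) = ∼(relativize f a) ⊓ f := by
  rw [relativize, relativize, dneg_inf, dneg_sup, dneg_dneg, inf_sup_right, inf_sup_right,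
    inf_right_comm, inf_idem, inf_comm f, sup_comm]

/-- Since `∼f ⊓ f ≤ ∼g` for `g ≤ f`, `relativize g` factors through `relativize f`. -/
theorem relativize_eq_sup_inf {f g : L} (hgf : g ≤ f) (a : L) :
    relativize g a = ∼g ⊓ g ⊔ relativize f a ⊓ g := by
  rw [relativize, relativize, inf_assoc, inf_eq_right.mpr hgf, inf_sup_right, inf_sup_right,
    ← sup_assoc, sup_eq_left.mpr (inf_le_inf_right g (dneg_le_dneg hgf))]

theorem relativize_eq_of_le {f g a b : L} (hgf : g ≤ f)
    (h : relativize f a = relativize f b) : relativize g a = relativize g b := by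
  rw [relativize_eq_sup_inf hgf, relativize_eq_sup_inf hgf, h]

end Relativize

section Congruence

variable {L : Type*} [DeMorgan L] {θ : L → L → Prop}

theorem IsCongruence.inf_sup_dneg_self (hθ : IsCongruence θ)
    (hb : ∀ x y : L, θ ((x ⊓ ∼x) ⊔ y) y) (x y : L) : θ ((x ⊔ ∼x) ⊓ y) y := by
  have h := hθ.2.2.2 _ _ (hb x (∼y))
  rwa [dneg_sup, dneg_inf, dneg_dneg, dneg_dneg, sup_comm] at h

/-- The elements `f` with `f ⊓ y ≡ y` for all `y` form a filter containing every `x ⊔ ∼x`. -/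
theorem IsCongruence.inf_of_mem_Fcomp (hθ : IsCongruence θ)
    (hb : ∀ x y : L, θ ((x ⊓ ∼x) ⊔ y) y) {f : L} (hf : f ∈ Fcomp L) (y : L) :
    θ (f ⊓ y) y := by
  refine Fcomp_subset_of_isLatFilter (S := {f | ∀ y, θ (f ⊓ y) y}) ⟨?_, ?_⟩
    (hθ.inf_sup_dneg_self hb) hf y
  · intro f g hf hfg y
    have h := hθ.2.2.1 _ _ _ _ (hf y) (hθ.1.refl (g ⊓ y))
    rwa [sup_eq_right.mpr (inf_le_inf_right y hfg), sup_eq_left.mpr inf_le_right] at h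
  · intro f g hf hg y
    rw [inf_assoc]
    exact hθ.1.trans (hf (g ⊓ y)) (hg y)

theorem IsCongruence.dneg_sup_of_mem_Fcomp (hθ : IsCongruence θ)
    (hb : ∀ x y : L, θ ((x ⊓ ∼x) ⊔ y) y) {f : L} (hf : f ∈ Fcomp L) (y : L) :
    θ (∼f ⊔ y) y := by
  have h := hθ.2.2.2 _ _ (hθ.inf_of_mem_Fcomp hb hf (∼y))
  rwa [dneg_inf, dneg_dneg] at h

theorem IsCongruence.relativize (hθ : IsCongruence θ)
    (hb : ∀ x y : L, θ ((x ⊓ ∼x) ⊔ y) y) {f : L} (hf : f ∈ Fcomp L) (a : L) :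
    θ (relativize f a) a := by
  have h := hθ.2.1 _ _ _ _ (hθ.dneg_sup_of_mem_Fcomp hb hf a) (hθ.1.refl f)
  rw [inf_comm a] at h
  exact hθ.1.trans h (hθ.inf_of_mem_Fcomp hb hf a)

end Congruence

def booleanCongr (L : Type*) [DeMorgan L] (a b : L) : Prop :=
  ∃ f ∈ Fcomp L, relativize f a = relativize f b

section BooleanCongr

variable {L : Type*} [DeMorgan L]

theorem booleanCongr.exists_common {a b c d : L} (hab : booleanCongr L a b)
    (hcd : booleanCongr L c d) :
    ∃ f ∈ Fcomp L, relativize f a = relativize f b ∧ relativize f c = relativize f d := by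
  obtain ⟨f, hf, hab⟩ := hab
  obtain ⟨g, hg, hcd⟩ := hcd
  exact ⟨f ⊓ g, isLatFilter_Fcomp.2 f g hf hg, relativize_eq_of_le inf_le_left hab,
    relativize_eq_of_le inf_le_right hcd⟩

theorem isCongruence_booleanCongr : IsCongruence (booleanCongr L) := by
  refine ⟨⟨fun a => ⟨a ⊔ ∼a, sup_dneg_mem_Fcomp a, rfl⟩, ?_, ?_⟩, ?_, ?_, ?_⟩
  · rintro a b ⟨f, hf, h⟩
    exact ⟨f, hf, h.symm⟩
  · intro a b c hab hbc
    obtain ⟨f, hf, hab, hbc⟩ := hab.exists_common hbc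
    exact ⟨f, hf, hab.trans hbc⟩
  · intro a b c d hab hcd
    obtain ⟨f, hf, hab, hcd⟩ := hab.exists_common hcd
    exact ⟨f, hf, by rw [relativize_inf, relativize_inf, hab, hcd]⟩
  · intro a b c d hab hcd
    obtain ⟨f, hf, hab, hcd⟩ := hab.exists_common hcd
    exact ⟨f, hf, by rw [relativize_sup, relativize_sup, hab, hcd]⟩
  · rintro a b ⟨f, hf, h⟩
    exact ⟨f, hf, by rw [relativize_dneg, relativize_dneg, h]⟩

theorem booleanCongr_inf_dneg_sup (x y : L) : booleanCongr L ((x ⊓ ∼x) ⊔ y) y :=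
  ⟨x ⊔ ∼x, sup_dneg_mem_Fcomp x, by
    rw [relativize, relativize, dneg_sup, dneg_dneg, inf_comm (∼x) x, ← sup_assoc, sup_idem]⟩

theorem booleanCongr_le {θ : L → L → Prop} (hθ : IsCongruence θ)
    (hb : ∀ x y : L, θ ((x ⊓ ∼x) ⊔ y) y) {a b : L} (hab : booleanCongr L a b) : θ a b := by
  obtain ⟨f, hf, h⟩ := hab
  exact hθ.1.trans (hθ.1.symm (hθ.relativize hb hf a)) (h ▸ hθ.relativize hb hf b)

end BooleanCongr

theorem statement8_general {L : Type*} [DeMorgan L] (θ : L → L → Prop)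
    (hθ : ∀ a b : L, θ a b ↔ ∃ f ∈ Fcomp L, (∼f ⊔ a) ⊓ f = (∼f ⊔ b) ⊓ f) :
    IsCongruence θ ∧
    (∀ x y : L, θ ((x ⊓ ∼x) ⊔ y) y) ∧
    (∀ θ' : L → L → Prop, IsCongruence θ' →
      (∀ x y : L, θ' ((x ⊓ ∼x) ⊔ y) y) →
      ∀ a b : L, θ a b → θ' a b) := by
  obtain rfl : θ = booleanCongr L := funext₂ fun a b => propext (hθ a b)
  exact ⟨isCongruence_booleanCongr, booleanCongr_inf_dneg_sup,
    fun θ' hθ' hb _ _ => booleanCongr_le hθ' hb⟩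

/-- the smallest congruence of a De Morgan lattice whose quotient is a Boolean
lattice. -/
theorem statement8 {L : Type*} [DeMorgan L] [Nonempty L] (θ : L → L → Prop)
    (hθ : ∀ a b : L, θ a b ↔ ∃ f ∈ Fcomp L, (∼f ⊔ a) ⊓ f = (∼f ⊔ b) ⊓ f) :
    IsCongruence θ ∧
    (∀ x y : L, θ ((x ⊓ ∼x) ⊔ y) y) ∧
    (∀ θ' : L → L → Prop, IsCongruence θ' →
      (∀ x y : L, θ' ((x ⊓ ∼x) ⊔ y) y) →
      ∀ a b : L, θ a b → θ' a b) :=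
  statement8_general θ hθ
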